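/- For finite groups A and B with A abelian, the minimal number of generators of the regular wreath product satisfies d(A ≀ B) = d(A) + d(B) when A and B are p-groups. -/

import Mathlib

open scoped Pointwise

/-- The right-translation action of `B` on `B → A`: `(b • f) x = f (x * b)`. -/
def wreathAction (A B : Type) [Group A] [Group B] : B →* MulAut (B → A) where
  toFun b :=
    { toFun := fun f x => f (x * b)
      invFun := fun f x => f (x * b⁻¹)
      left_inv := fun f => by funext x; simp [mul_assoc]
      right_inv := fun f => by funext x; simp [mul_assoc]
      map_mul' := fun f g => rfl }
  map_one' := by
    apply MulEquiv.ext; intro f; funext x; simp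
  map_mul' := fun b₁ b₂ => by
    apply MulEquiv.ext; intro f; funext x; simp [mul_assoc]

/-- The regular wreath product `A ≀ B`: pairs `(f, b)` with `f : B → A`, `b : B`,
with multiplication `(f₁, b₁)(f₂, b₂) = (f₁ · f₂^{b₁⁻¹}, b₁ b₂)` where
`f₂^{b₁⁻¹}(x) = f₂ (x b₁)`. -/
abbrev Wreath (A B : Type) [Group A] [Group B] : Type :=
  (B → A) ⋊[wreathAction A B] B

instance {N H : Type} [Group N] [Group H] (φ : H →* MulAut N) [Finite N] [Finite H] :
    Finite (N ⋊[φ] H) :=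
  Finite.of_injective (fun x => (x.left, x.right)) (fun a b h => by
    cases a; cases b
    simpa [SemidirectProduct.ext_iff, Prod.ext_iff] using h)

/-!
The wreath product is generated by one copy of a generating set of `A`, placed in the coordinate
`1` of the base group `B → A`, together with a generating set of `B`, since conjugating by `B`
moves that coordinate around. Conversely, summing the base coordinates (here `A` is abelian) maps
`A ≀ B` onto `A × B`. For finite `p`-groups, `d(A × B) ≥ d(A) + d(B)`: passing to Frattini
quotients, which are elementary abelian,
`p ^ d(X × Y) ≥ |X × Y| = |X| |Y| ≥ p ^ d(X) p ^ d(Y)`.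
-/

open Subgroup

theorem mem_frattini_iff {G : Type*} [Group G] {x : G} :
    x ∈ frattini G ↔ ∀ M : Subgroup G, IsCoatom M → x ∈ M := by
  simp [frattini, Order.radical, mem_iInf]

theorem rank_quotient_frattini (G : Type*) [Group G] [Finite G] :
    Group.rank (G ⧸ frattini G) = Group.rank G := by
  refine le_antisymm (Group.rank_le_of_surjective _ (QuotientGroup.mk'_surjective _)) ?_
  classical
  obtain ⟨S, hS, hclosure⟩ := Group.rank_spec (G ⧸ frattini G)
  have hlift : closure (S.image Quotient.out : Set G) ⊔ frattini G = ⊤ := by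
    have := comap_map_eq (QuotientGroup.mk' (frattini G)) (closure (S.image Quotient.out))
    rw [QuotientGroup.ker_mk', MonoidHom.map_closure, Finset.coe_image, Set.image_image] at this
    simp [← this, hclosure]
  calc Group.rank G ≤ (S.image Quotient.out).card := Group.rank_le (frattini_nongenerating hlift)
    _ ≤ Group.rank (G ⧸ frattini G) := hS ▸ Finset.card_image_le

theorem card_le_pow_rank_of_pow_eq_one {V : Type*} [Group V] [IsMulCommutative V] [Finite V]
    {n : ℕ} (hn : 0 < n) (hV : ∀ v : V, v ^ n = 1) : Nat.card V ≤ n ^ Group.rank V :=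
  letI : CommGroup V := { ‹Group V› with mul_comm := mul_comm' }
  Nat.le_of_dvd (pow_pos hn _) (card_dvd_exponent_pow_rank' V hV)

namespace IsPGroup

variable {p : ℕ} [hp : Fact p.Prime] {G : Type*} [Group G]

theorem mul_card_le_card_of_lt (hG : IsPGroup p G) {H K : Subgroup G} [Finite K] (hHK : H < K) :
    p * Nat.card H ≤ Nat.card K := by
  obtain ⟨n, hn⟩ := (hG.to_subgroup K).index (H.subgroupOf K)
  have hne : H.relIndex K ≠ 1 := fun h => hHK.not_ge (relIndex_eq_one.mp h)
  have hcard : Nat.card H * H.relIndex K = Nat.card K := by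
    rw [← relIndex_bot_left, ← relIndex_bot_left, relIndex_mul_relIndex _ _ _ bot_le hHK.le]
  rw [← hcard, mul_comm]
  refine Nat.mul_le_mul_left _ ?_
  rw [relIndex, hn] at hne ⊢
  exact Nat.le_self_pow (by rintro rfl; simp at hne) p

variable [Finite G]

theorem exists_finset_sup_closure_eq_top (hG : IsPGroup p G) (H : Subgroup G) :
    ∃ S : Finset G, H ⊔ closure S = ⊤ ∧ p ^ S.card * Nat.card H ≤ Nat.card G := by
  classical
  -- Adjoin an element outside `H`: by `mul_card_le_card_of_lt` this multiplies `|H|` by `≥ p`.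
  induction H using WellFoundedGT.induction with
  | _ H ih =>
  by_cases hH : H = ⊤
  · exact ⟨∅, by simp [hH]⟩
  obtain ⟨g, hg⟩ : ∃ g, g ∉ H := by simpa [eq_top_iff'] using hH
  have hlt : H < H ⊔ zpowers g :=
    lt_of_le_of_ne le_sup_left fun h => hg (h ▸ mem_sup_right (mem_zpowers g))
  obtain ⟨S, hS, hcard⟩ := ih _ hlt
  refine ⟨insert g S, top_unique ?_, ?_⟩
  · rw [← hS, Finset.coe_insert, Set.insert_eq, Subgroup.closure_union, ← zpowers_eq_closure,
      sup_assoc]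
  · calc p ^ (insert g S).card * Nat.card H ≤ p ^ S.card * (p * Nat.card H) := by
          rw [← mul_assoc, ← pow_succ]
          exact Nat.mul_le_mul_right _
            (Nat.pow_le_pow_right hp.out.pos (Finset.card_insert_le g S))
      _ ≤ p ^ S.card * Nat.card (H ⊔ zpowers g : Subgroup G) :=
          Nat.mul_le_mul_left _ (hG.mul_card_le_card_of_lt hlt)
      _ ≤ Nat.card G := hcard

theorem pow_rank_le_card (hG : IsPGroup p G) : p ^ Group.rank G ≤ Nat.card G := by
  obtain ⟨S, hS, hcard⟩ := hG.exists_finset_sup_closure_eq_top ⊥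
  rw [bot_sup_eq] at hS
  simpa using (Nat.pow_le_pow_right hp.out.pos (Group.rank_le hS)).trans (by simpa using hcard)

theorem normal_of_isCoatom (hG : IsPGroup p G) {M : Subgroup G} (hM : IsCoatom M) : M.Normal :=
  have := hG.isNilpotent
  NormalizerCondition.normal_of_coatom M Group.normalizerCondition_of_isNilpotent hM

theorem card_quotient_eq_of_isCoatom (hG : IsPGroup p G) {M : Subgroup G} [M.Normal]
    (hM : IsCoatom M) : Nat.card (G ⧸ M) = p := by
  have : Nontrivial (G ⧸ M) := QuotientGroup.nontrivial_iff.mpr hM.1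
  obtain ⟨g, hg⟩ := exists_prime_orderOf_dvd_card' (G := G ⧸ M) p
    ((hG.to_quotient M).card_eq_or_dvd.resolve_left Finite.one_lt_card.ne')
  have hinj := comap_injective (QuotientGroup.mk'_surjective M)
  rcases hM.le_iff.mp (QuotientGroup.le_comap_mk' M (zpowers g)) with h | h
  · rw [← comap_top (QuotientGroup.mk' M)] at h
    rw [← card_top, ← hinj h, Nat.card_zpowers, hg]
  · have : zpowers g = ⊥ := hinj (h.trans (by rw [MonoidHom.comap_bot, QuotientGroup.ker_mk']))
    rw [zpowers_eq_bot.mp this, orderOf_one] at hg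
    exact absurd hg.symm hp.out.ne_one

theorem mk_frattini_eq_mk (hG : IsPGroup p G) {x y : G}
    (h : ∀ (M : Subgroup G) [M.Normal], IsCoatom M → (x : G ⧸ M) = y) :
    (x : G ⧸ frattini G) = y := by
  rw [QuotientGroup.eq, mem_frattini_iff]
  intro M hM
  have := hG.normal_of_isCoatom hM
  exact QuotientGroup.eq.mp (h M hM)

theorem isMulCommutative_quotient_frattini (hG : IsPGroup p G) :
    IsMulCommutative (G ⧸ frattini G) := by
  refine ⟨⟨fun a b => ?_⟩⟩
  induction a using QuotientGroup.induction_on with | _ x => ?_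
  induction b using QuotientGroup.induction_on with | _ y => ?_
  rw [← QuotientGroup.mk_mul, ← QuotientGroup.mk_mul]
  refine hG.mk_frattini_eq_mk fun M _ hM => ?_
  have := isCyclic_of_prime_card (hG.card_quotient_eq_of_isCoatom hM)
  exact mul_comm' (x : G ⧸ M) y

theorem pow_quotient_frattini (hG : IsPGroup p G) (a : G ⧸ frattini G) : a ^ p = 1 := by
  induction a using QuotientGroup.induction_on with | _ x => ?_
  rw [← QuotientGroup.mk_pow, ← QuotientGroup.mk_one]
  refine hG.mk_frattini_eq_mk fun M _ hM => ?_
  rw [QuotientGroup.mk_pow, QuotientGroup.mk_one, ← hG.card_quotient_eq_of_isCoatom hM,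
    pow_card_eq_one']

end IsPGroup

theorem rank_add_le_rank_prod_of_pow_eq_one {p : ℕ} [hp : Fact p.Prime] {X Y : Type*} [Group X]
    [Group Y] [IsMulCommutative X] [IsMulCommutative Y] [Finite X] [Finite Y]
    (hX : ∀ x : X, x ^ p = 1) (hY : ∀ y : Y, y ^ p = 1) :
    Group.rank X + Group.rank Y ≤ Group.rank (X × Y) := by
  have hXp : IsPGroup p X := fun x => ⟨1, by rw [pow_one, hX]⟩
  have hYp : IsPGroup p Y := fun y => ⟨1, by rw [pow_one, hY]⟩
  refine (Nat.pow_le_pow_iff_right hp.out.one_lt).mp ?_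
  calc p ^ (Group.rank X + Group.rank Y) = p ^ Group.rank X * p ^ Group.rank Y := pow_add ..
    _ ≤ Nat.card X * Nat.card Y := Nat.mul_le_mul hXp.pow_rank_le_card hYp.pow_rank_le_card
    _ = Nat.card (X × Y) := (Nat.card_prod X Y).symm
    _ ≤ p ^ Group.rank (X × Y) :=
        card_le_pow_rank_of_pow_eq_one hp.out.pos fun v => Prod.ext (hX v.1) (hY v.2)

theorem IsPGroup.rank_add_le_rank_prod {p : ℕ} [Fact p.Prime] {G H : Type*} [Group G] [Group H]
    [Finite G] [Finite H] (hG : IsPGroup p G) (hH : IsPGroup p H) :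
    Group.rank G + Group.rank H ≤ Group.rank (G × H) := by
  have := hG.isMulCommutative_quotient_frattini
  have := hH.isMulCommutative_quotient_frattini
  calc Group.rank G + Group.rank H
      = Group.rank (G ⧸ frattini G) + Group.rank (H ⧸ frattini H) := by
        rw [rank_quotient_frattini, rank_quotient_frattini]
    _ ≤ Group.rank ((G ⧸ frattini G) × (H ⧸ frattini H)) :=
        rank_add_le_rank_prod_of_pow_eq_one hG.pow_quotient_frattini hH.pow_quotient_frattini
    _ ≤ Group.rank (G × H) :=
        Group.rank_le_of_surjective ((QuotientGroup.mk' _).prodMap (QuotientGroup.mk' _))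
          ((QuotientGroup.mk'_surjective _).prodMap (QuotientGroup.mk'_surjective _))

theorem wreathAction_mulSingle {A B : Type} [Group A] [Group B] [DecidableEq B] (b c : B)
    (a : A) :
    wreathAction A B b (Pi.mulSingle c a) = Pi.mulSingle (c * b⁻¹) a := by
  funext x
  simp [wreathAction, Pi.mulSingle_apply, eq_mul_inv_iff_mul_eq]

namespace Wreath

section

variable {A B : Type} [Group A] [Group B]

theorem eq_top_of_inl_mulSingle_mem_of_inr_mem [Finite B] [DecidableEq B] {SA : Set A}
    {SB : Set B} (hA : closure SA = ⊤) (hB : closure SB = ⊤) {H : Subgroup (Wreath A B)}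
    (hSA : ∀ a ∈ SA, SemidirectProduct.inl (Pi.mulSingle 1 a) ∈ H)
    (hSB : ∀ b ∈ SB, SemidirectProduct.inr b ∈ H) : H = ⊤ := by
  have hinr : ∀ b : B, SemidirectProduct.inr b ∈ H := by
    suffices closure SB ≤ comap SemidirectProduct.inr H from fun b => this (hB ▸ mem_top b)
    exact (closure_le _).mpr hSB
  have hsingle : ∀ (c : B) (a : A), SemidirectProduct.inl (Pi.mulSingle c a) ∈ H := by
    intro c
    suffices closure SA ≤ comap (SemidirectProduct.inl.comp (MonoidHom.mulSingle _ c)) H from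
      fun a => this (hA ▸ mem_top a)
    refine (closure_le _).mpr fun a ha => ?_
    have := mul_mem (mul_mem (hinr c⁻¹) (hSA a ha)) (hinr c⁻¹⁻¹)
    rwa [← SemidirectProduct.inl_aut, wreathAction_mulSingle, inv_inv, one_mul] at this
  refine (eq_top_iff' H).mpr fun w => ?_
  rw [← SemidirectProduct.inl_left_mul_inr_right w]
  exact mul_mem (pi_mem_of_mulSingle_mem (H := comap SemidirectProduct.inl H) _
    fun c => hsingle c _) (hinr _)

theorem rank_le [Finite A] [Finite B] :
    Group.rank (Wreath A B) ≤ Group.rank A + Group.rank B := by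
  classical
  obtain ⟨SA, hSA, hA⟩ := Group.rank_spec A
  obtain ⟨SB, hSB, hB⟩ := Group.rank_spec B
  calc Group.rank (Wreath A B)
      ≤ (SA.image (fun a => SemidirectProduct.inl (Pi.mulSingle 1 a)) ∪
          SB.image SemidirectProduct.inr).card :=
        Group.rank_le <| eq_top_of_inl_mulSingle_mem_of_inr_mem hA hB
          (fun _ ha => subset_closure (Finset.mem_union_left _ (Finset.mem_image_of_mem _ ha)))
          (fun _ hb => subset_closure (Finset.mem_union_right _ (Finset.mem_image_of_mem _ hb)))
    _ ≤ SA.card + SB.card :=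
        (Finset.card_union_le _ _).trans (add_le_add Finset.card_image_le Finset.card_image_le)
    _ = Group.rank A + Group.rank B := by rw [hSA, hSB]

end

section

variable {A B : Type} [CommGroup A] [Group B] [Fintype B]

def toProd : Wreath A B →* A × B :=
  SemidirectProduct.lift ((MonoidHom.inl A B).comp (∏ b, Pi.evalMonoidHom _ b))
    (MonoidHom.inr A B) fun b => by
      ext f
      · simpa [MulAut.conj_apply, wreathAction] using
          Fintype.prod_equiv (Equiv.mulRight b) _ _ fun _ => rfl
      · simp [MulAut.conj_apply]

theorem toProd_surjective : Function.Surjective (toProd : Wreath A B →* A × B) := by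
  classical
  rintro ⟨a, b⟩
  refine ⟨SemidirectProduct.inl (Pi.mulSingle 1 a) * SemidirectProduct.inr b, ?_⟩
  simp [toProd]

end

end Wreath

/-- For finite `p`-groups `A`, `B` with `A` abelian,
`d(A ≀ B) = d(A) + d(B)`. -/
theorem rank_wreath (p : ℕ) [Fact p.Prime] (A B : Type) [CommGroup A] [Group B]
    [Finite A] [Finite B] (hA : IsPGroup p A) (hB : IsPGroup p B) :
    Group.rank (Wreath A B) = Group.rank A + Group.rank B := by
  have := Fintype.ofFinite B
  refine le_antisymm Wreath.rank_le ?_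
  calc Group.rank A + Group.rank B ≤ Group.rank (A × B) := hA.rank_add_le_rank_prod hB
    _ ≤ Group.rank (Wreath A B) :=
        Group.rank_le_of_surjective Wreath.toProd Wreath.toProd_surjective
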